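/- arXiv:1609.08440 — 9 statements merged into one kernel-verified Lean document; each statement's English description precedes it below -/
import Mathlib

section
/- Let F be a field, let q, r ∈ F be nonzero, let ι be a finite type, let e : ι → ℤ, and let T be the diagonal ι×ι matrix over F with diagonal entries T_{tt} = q^{e(t)}. Let A be an invertible ι×ι matrix over F and P any ι×ι matrix over F such that A − A⁻¹ = (q − q⁻¹)·1 − (r − r⁻¹ + q − q⁻¹)·P and T·A·T·A = 1. Then for all t, s ∈ ι one has (1 − q^{e(t)+e(s)})·A_{ts} = (q − q⁻¹)·δ_{ts} − (r − r⁻¹ + q − q⁻¹)·P_{ts}. -/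
/-- For an invertible matrix `A` and a matrix `P` over a field `F`
satisfying `A - A⁻¹ = (q - q⁻¹)·1 - (r - r⁻¹ + q - q⁻¹)·P` and `T·A·T·A = 1`,
where `T` is the diagonal matrix with entries `q^(e t)`, the matrix entries of
`A` and `P` are related by
`(1 - q^(e t + e s))·A_{ts} = (q - q⁻¹)·δ_{ts} - (r - r⁻¹ + q - q⁻¹)·P_{ts}`. -/
theorem stmt0 {F : Type*} [Field F] {ι : Type*} [Fintype ι] [DecidableEq ι]
    (q r : F) (hq : q ≠ 0) (hr : r ≠ 0) (e : ι → ℤ)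
    (T A P : Matrix ι ι F)
    (hT : T = Matrix.diagonal fun t => q ^ (e t))
    (hA : IsUnit A)
    (hrel : A - A⁻¹ = (q - q⁻¹) • (1 : Matrix ι ι F) - (r - r⁻¹ + q - q⁻¹) • P)
    (hTATA : T * A * T * A = 1) :
    ∀ t s : ι, (1 - q ^ (e t + e s)) * A t s =
      (q - q⁻¹) * (if t = s then (1 : F) else 0) - (r - r⁻¹ + q - q⁻¹) * P t s := by
  intro t s
  have hinv : A⁻¹ = T * A * T := Matrix.inv_eq_left_inv hTATA
  have hAinv : A⁻¹ t s = q ^ (e t + e s) * A t s := by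
    rw [hinv, hT]
    simp [Matrix.diagonal_mul, Matrix.mul_diagonal, zpow_add₀ hq]
    ring
  have h := congrFun (congrFun hrel t) s
  simp only [Matrix.sub_apply, Matrix.smul_apply, Matrix.one_apply, smul_eq_mul] at h
  rw [hAinv] at h
  rw [sub_mul, one_mul, h]
end

section
/- Let F be a field and q ∈ F a nonzero element of infinite multiplicative order (q^k ≠ 1 for every nonzero integer k). Let r ∈ F be nonzero with r⁻¹ ≠ q and r⁻¹ ≠ −q⁻¹. Let ι be a finite type, e : ι → ℤ a function with e(t) + e(s) ≠ 0 for all t ≠ s, and T the diagonal matrix with entries T_{tt} = q^{e(t)}. Let A be an invertible ι×ι matrix and P an ι×ι matrix of rank 1 with P² = P, AP = PA = r⁻¹·P, satisfying A − A⁻¹ = (q − q⁻¹)·1 − (r − r⁻¹ + q − q⁻¹)·P and T·A·T·A = 1. Then for every s ∈ ι, if the diagonal entry P_{ss} = 0, then e(s) = 1 or e(s) = −1. -/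
lemma rank_one_minor {F : Type*} [Field F] {ι : Type*} [Fintype ι] [DecidableEq ι]
    (P : Matrix ι ι F) (h : P.rank = 1) (i j k l : ι) :
    P i j * P k l = P i l * P k j := by
  have h1 : Module.finrank F (LinearMap.range P.mulVecLin) = 1 := h
  obtain ⟨v, hv0, hv⟩ := finrank_eq_one_iff'.mp h1
  have col : ∀ j : ι, ∃ c : F, ∀ i, P i j = c * (v : ι → F) i := by
    intro j
    obtain ⟨c, hc⟩ := hv ⟨P.mulVec (Pi.single j 1), ⟨Pi.single j 1, rfl⟩⟩
    refine ⟨c, fun i => ?_⟩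
    have h2 : (c • (v : ι → F)) i = P.mulVec (Pi.single j 1) i := by
      rw [← Submodule.coe_smul, hc]
    simpa [Matrix.mulVec_single] using h2.symm
  obtain ⟨cj, hj⟩ := col j
  obtain ⟨cl, hl⟩ := col l
  rw [hj, hl, hj, hl]; ring

/-- With `q` of infinite multiplicative order, `r⁻¹ ∉ {q, -q⁻¹}`,
`T` the diagonal matrix with entries `q^(e t)` where `e t + e s ≠ 0` for `t ≠ s`,
`A` invertible, and `P` a rank-1 idempotent with `AP = PA = r⁻¹·P`,
satisfying `A - A⁻¹ = (q - q⁻¹)·1 - (r - r⁻¹ + q - q⁻¹)·P` and `T·A·T·A = 1`: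
if a diagonal entry `P_{ss}` vanishes then `e s = ±1`. -/
theorem stmt1 {F : Type*} [Field F] {ι : Type*} [Fintype ι] [DecidableEq ι]
    (q r : F) (hq : q ≠ 0) (hr : r ≠ 0)
    (hord : ∀ k : ℤ, k ≠ 0 → q ^ k ≠ 1)
    (hrq : r⁻¹ ≠ q) (hrq' : r⁻¹ ≠ -q⁻¹)
    (e : ι → ℤ) (he : ∀ t s : ι, t ≠ s → e t + e s ≠ 0)
    (T A P : Matrix ι ι F)
    (hT : T = Matrix.diagonal fun t => q ^ (e t))
    (hA : IsUnit A)
    (hP2 : P * P = P) (hPrank : P.rank = 1)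
    (hAP : A * P = r⁻¹ • P) (hPA : P * A = r⁻¹ • P)
    (hrel : A - A⁻¹ = (q - q⁻¹) • (1 : Matrix ι ι F) - (r - r⁻¹ + q - q⁻¹) • P)
    (hTATA : T * A * T * A = 1) :
    ∀ s : ι, P s s = 0 → e s = 1 ∨ e s = -1 := by
  intro s hss
  have hdet : IsUnit A.det := (Matrix.isUnit_iff_isUnit_det A).mp hA
  have hAinv : A⁻¹ = T * A * T := Matrix.inv_eq_left_inv hTATA
  set c := r - r⁻¹ + q - q⁻¹ with hc
  -- entrywise form of hrel
  have hentry : ∀ t u : ι, A t u - q ^ (e t) * A t u * q ^ (e u)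
      = (q - q⁻¹) * (if t = u then 1 else 0) - c * P t u := by
    intro t u
    have h0 := congrFun (congrFun hrel t) u
    rw [hAinv, hT, Matrix.sub_apply, Matrix.sub_apply, Matrix.smul_apply,
      Matrix.smul_apply, Matrix.one_apply, Matrix.mul_diagonal, Matrix.diagonal_mul,
      smul_eq_mul, smul_eq_mul] at h0
    exact h0
  -- diagonal equation at s
  have h1 : A s s * (1 - q ^ (2 * e s)) = q - q⁻¹ := by
    have := hentry s s
    rw [if_pos rfl, hss] at this
    have h2 : q ^ (2 * e s) = q ^ (e s) * q ^ (e s) := by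
      rw [two_mul, zpow_add₀ hq]
    rw [h2]; linear_combination this
  -- off-diagonal products vanish
  have hAzero : ∀ t : ι, t ≠ s → A s t * A t s = 0 := by
    intro t hts
    have hst : s ≠ t := fun h => hts h.symm
    have hx : q ^ (e s + e t) ≠ 1 := hord _ (he s t hst)
    have hx1 : (1 : F) - q ^ (e s + e t) ≠ 0 := sub_ne_zero.mpr (Ne.symm hx)
    have e1 := hentry s t
    rw [if_neg hst] at e1
    have e2 := hentry t s
    rw [if_neg hts] at e2
    have hxq : q ^ (e s + e t) = q ^ (e s) * q ^ (e t) := zpow_add₀ hq _ _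
    have f1 : A s t * (1 - q ^ (e s + e t)) = - (c * P s t) := by
      rw [hxq]; linear_combination e1
    have f2 : A t s * (1 - q ^ (e s + e t)) = - (c * P t s) := by
      rw [hxq]; linear_combination e2
    have hPprod : P s t * P t s = 0 := by
      rw [rank_one_minor P hPrank s t t s, hss, zero_mul]
    have : (A s t * A t s) * ((1 - q ^ (e s + e t)) * (1 - q ^ (e s + e t))) = 0 := by
      calc (A s t * A t s) * ((1 - q ^ (e s + e t)) * (1 - q ^ (e s + e t)))
          = (A s t * (1 - q ^ (e s + e t))) * (A t s * (1 - q ^ (e s + e t))) := by ring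
        _ = (- (c * P s t)) * (- (c * P t s)) := by rw [f1, f2]
        _ = c * c * (P s t * P t s) := by ring
        _ = 0 := by rw [hPprod, mul_zero]
    exact (mul_eq_zero.mp this).resolve_right (mul_ne_zero hx1 hx1)
  -- quadratic equation for A s s
  have hAA : A * A = 1 + (q - q⁻¹) • A - (c * r⁻¹) • P := by
    have h0 : (A - A⁻¹) * A = ((q - q⁻¹) • (1 : Matrix ι ι F) - c • P) * A := by
      rw [hrel]
    rw [sub_mul, sub_mul, Matrix.nonsing_inv_mul A hdet, Matrix.smul_mul,
      Matrix.smul_mul, one_mul, hPA] at h0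
    rw [smul_smul] at h0
    rw [sub_eq_iff_eq_add] at h0
    rw [h0]; abel
  have hquad : A s s * A s s = 1 + (q - q⁻¹) * A s s := by
    have h0 := congrFun (congrFun hAA s) s
    rw [Matrix.mul_apply] at h0
    have hsum : ∑ t, A s t * A t s = A s s * A s s :=
      Finset.sum_eq_single s (fun t _ ht => hAzero t ht)
        (fun h => absurd (Finset.mem_univ s) h)
    rw [hsum] at h0
    simpa [Matrix.add_apply, Matrix.sub_apply, Matrix.smul_apply, Matrix.one_apply,
      hss, smul_eq_mul] using h0
  -- factor
  have hfac : (A s s - q) * (A s s + q⁻¹) = 0 := by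
    have hq1 : q * q⁻¹ = 1 := mul_inv_cancel₀ hq
    linear_combination hquad - hq1
  rcases mul_eq_zero.mp hfac with h | h
  · -- A s s = q, then q^(2 e s + 2) = 1, so e s = -1
    have hAss : A s s = q := sub_eq_zero.mp h
    right
    rw [hAss] at h1
    have k1 : q * q ^ (2 * e s) = q⁻¹ := by linear_combination -h1
    have hy : q ^ (2 * e s + 2) = 1 := by
      have h2 : q ^ (2 * e s + 2) = q * q ^ (2 * e s) * q := by
        rw [zpow_add₀ hq, show (2:ℤ) = 1 + 1 from rfl, zpow_add₀ hq, zpow_one]; ring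
      rw [h2, k1, inv_mul_cancel₀ hq]
    by_contra hne
    exact hord (2 * e s + 2) (by omega) hy
  · -- A s s = -q⁻¹, then q^(2 e s - 2) = 1, so e s = 1
    have hAss : A s s = -q⁻¹ := eq_neg_of_add_eq_zero_left h
    left
    rw [hAss] at h1
    have k1 : q⁻¹ * q ^ (2 * e s) = q := by linear_combination h1
    have hy : q ^ (2 * e s - 2) = 1 := by
      have h2 : q ^ (2 * e s - 2) = q⁻¹ * q ^ (2 * e s) * q⁻¹ := by
        rw [sub_eq_add_neg, zpow_add₀ hq, show (-2:ℤ) = -1 + -1 from rfl,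
          zpow_add₀ hq, zpow_neg_one]; ring
      rw [h2, k1, mul_inv_cancel₀ hq]
    by_contra hne
    exact hord (2 * e s - 2) (by omega) hy
end

section
/- Let F be a field and q ∈ F a nonzero element of infinite multiplicative order (q^k ≠ 1 for every nonzero integer k). Let r ∈ F be nonzero with r⁻¹ ≠ q and r⁻¹ ≠ −q⁻¹. Let ι be a nonempty finite type and e : ι → ℤ an injective function such that e(t) + e(s) ≠ 0 for all t ≠ s and such that e(t) ∉ {1, −1} for every t (so the eigenvalues q^{e(t)} of T are mutually distinct and none equals q^{±1}). Let T be the diagonal matrix with entries T_{tt} = q^{e(t)}, let A be an invertible ι×ι matrix, and let P be an ι×ι matrix of rank 1 with P² = P, AP = PA = r⁻¹·P, satisfying A − A⁻¹ = (q − q⁻¹)·1 − (r − r⁻¹ + q − q⁻¹)·P and T·A·T·A = 1. Then the F-subalgebra of the ι×ι matrix algebra generated by A and T is the full matrix algebra; in particular the corresponding representation of the affine braid group AB₂ is indecomposable. -/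
/-!
Put `x t = q ^ e t` and `m = r - r⁻¹ + q - q⁻¹`. Since `T A T A = 1` we have `A⁻¹ = T A T`, so
entrywise the relation reads `A t s * (1 - x t * x s) = δ t s * (q - q⁻¹) - m * P t s`. Off the
diagonal `x t * x s ≠ 1` and `m ≠ 0`, so `A t s` and `P t s` vanish together. If row or column `t`
of `P` were zero, `A` would be block diagonal at `t`, and the `(t, t)` entries of `T A T A = 1` and
of the relation would force `x t ^ 2 = q ^ (±2)`, i.e. `e t = ±1`. So every row and column of the
rank one matrix `P` is nonzero, hence all entries of `P` and all off-diagonal entries of `A` are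
nonzero. Lagrange interpolation in `T`, whose eigenvalues are distinct, yields the diagonal matrix
units, and sandwiching `A` between them yields the others.
-/

open Matrix Polynomial

namespace Matrix

variable {F ι : Type*} [Field F] [Fintype ι] [DecidableEq ι]

lemma aeval_diagonal (d : ι → F) (p : F[X]) :
    aeval (diagonal d) p = diagonal fun i => p.eval (d i) := by
  rw [← diagonalAlgHom_apply (R := F), aeval_algHom_apply, aeval_pi_apply]
  simp

lemma single_mem_adjoin_diagonal {d : ι → F} (hd : Function.Injective d) (t : ι) :
    single t t 1 ∈ Algebra.adjoin F {diagonal d} := by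
  have hbasis : (fun i => (Lagrange.basis Finset.univ d t).eval (d i)) = Pi.single t 1 := by
    funext i
    rcases eq_or_ne i t with rfl | hit
    · simpa using Lagrange.eval_basis_self hd.injOn (Finset.mem_univ i)
    · simpa [hit] using Lagrange.eval_basis_of_ne hit.symm (Finset.mem_univ i)
  rw [← diagonal_single, ← hbasis, ← aeval_diagonal]
  exact aeval_mem_adjoin_singleton F _

lemma single_mem_of_diagonal_mem {S : Subalgebra F (Matrix ι ι F)} {d : ι → F}
    (hd : Function.Injective d) (hdS : diagonal d ∈ S) (t : ι) : single t t 1 ∈ S :=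
  Algebra.adjoin_le (Set.singleton_subset_iff.2 hdS) (single_mem_adjoin_diagonal hd t)

theorem subalgebra_eq_top_of_diagonal_mem {S : Subalgebra F (Matrix ι ι F)} {d : ι → F}
    (hd : Function.Injective d) (hdS : diagonal d ∈ S) {A : Matrix ι ι F} (hAS : A ∈ S)
    (hA : ∀ t s, t ≠ s → A t s ≠ 0) : S = ⊤ := by
  have hsingle : ∀ t s, single t s (1 : F) ∈ S := by
    intro t s
    rcases eq_or_ne t s with rfl | hts
    · exact single_mem_of_diagonal_mem hd hdS t
    have h : (A t s)⁻¹ • (single t t 1 * A * single s s 1) = single t s (1 : F) := by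
      simp [smul_single, hA t s hts]
    rw [← h]
    exact S.smul_mem (S.mul_mem (S.mul_mem (single_mem_of_diagonal_mem hd hdS t) hAS)
      (single_mem_of_diagonal_mem hd hdS s)) _
  refine eq_top_iff.2 fun M _ => ?_
  rw [matrix_eq_sum_single M]
  refine S.sum_mem fun t _ => S.sum_mem fun s _ => ?_
  simpa [smul_single] using S.smul_mem (hsingle t s) (M t s)

lemma exists_eq_vecMulVec_of_rank_le_one {m n : Type*} [Fintype n] [DecidableEq n]
    {P : Matrix m n F} (hP : P.rank ≤ 1) : ∃ v w, P = vecMulVec v w := by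
  obtain ⟨v, hv⟩ := finrank_le_one_iff.1 hP
  choose c hc using fun j =>
    hv ⟨P.col j, by simpa using LinearMap.mem_range_self P.mulVecLin (Pi.single j 1)⟩
  refine ⟨v, c, ?_⟩
  ext i j
  simpa [vecMulVec_apply, mul_comm] using (congrFun (congrArg Subtype.val (hc j)) i).symm

lemma apply_ne_zero_of_rank_le_one {m n : Type*} [Fintype n] [DecidableEq n]
    {P : Matrix m n F} (hP : P.rank ≤ 1) {i i' : m} {j j' : n}
    (hrow : P i j' ≠ 0) (hcol : P i' j ≠ 0) : P i j ≠ 0 := by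
  obtain ⟨v, w, rfl⟩ := exists_eq_vecMulVec_of_rank_le_one hP
  simp only [vecMulVec_apply, ne_eq, mul_eq_zero, not_or] at *
  exact ⟨hrow.1, hcol.2⟩

section

variable {x : ι → F} {A P : Matrix ι ι F} {q c m : F}

lemma apply_mul_one_sub_mul_eq (hTATA : diagonal x * A * diagonal x * A = 1)
    (hrel : A - A⁻¹ = c • 1 - m • P) (t s : ι) :
    A t s * (1 - x t * x s) = (if t = s then c else 0) - m * P t s := by
  have h := congrFun (congrFun hrel t) s
  rw [inv_eq_left_inv hTATA] at h
  simp only [Matrix.sub_apply, Matrix.smul_apply, one_apply, smul_eq_mul, mul_diagonal,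
    diagonal_mul, mul_ite, mul_one, mul_zero] at h
  linear_combination h

lemma sq_mul_apply_self_eq_one (hTATA : diagonal x * A * diagonal x * A = 1) {t : ι}
    (hA : ∀ s, s ≠ t → A t s * A s t = 0) : (x t * A t t) ^ 2 = 1 := by
  have h := congrFun (congrFun hTATA t) t
  rw [mul_apply, Finset.sum_eq_single t] at h
  · simpa [sq, mul_assoc, mul_left_comm] using h
  · intro s _ hst
    simp only [mul_diagonal, diagonal_mul]
    linear_combination x t * x s * hA s hst
  · simp

lemma sq_eq_sq_or_sq_eq_inv_sq {a y : F} (hq : q ≠ 0) (h₁ : a * (1 - y ^ 2) = q - q⁻¹)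
    (h₂ : (y * a) ^ 2 = 1) : y ^ 2 = q ^ 2 ∨ y ^ 2 = q⁻¹ ^ 2 := by
  have : (y ^ 2 - q ^ 2) * (y ^ 2 - q⁻¹ ^ 2) = 0 := by
    linear_combination -(1 - y ^ 2) ^ 2 * h₂ + y ^ 2 * (a * (1 - y ^ 2) + q - q⁻¹) * h₁
      + (q * q⁻¹ + 1 - 2 * y ^ 2) * mul_inv_cancel₀ hq
  simpa [sub_eq_zero] using this

lemma apply_self_ne_zero_or_exists_mul_ne_zero (hq : q ≠ 0) {t : ι}
    (hxt : x t ^ 2 ≠ q ^ 2 ∧ x t ^ 2 ≠ q⁻¹ ^ 2)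
    (hTATA : diagonal x * A * diagonal x * A = 1)
    (hrel : A - A⁻¹ = (q - q⁻¹) • 1 - m • P) :
    P t t ≠ 0 ∨ ∃ s, s ≠ t ∧ A t s * A s t ≠ 0 := by
  by_contra! h
  obtain ⟨hPtt, hA⟩ := h
  have hdiag := apply_mul_one_sub_mul_eq hTATA hrel t t
  rw [if_pos rfl, hPtt, mul_zero, sub_zero, ← sq] at hdiag
  rcases sq_eq_sq_or_sq_eq_inv_sq hq hdiag (sq_mul_apply_self_eq_one hTATA hA) with h | h
  exacts [hxt.1 h, hxt.2 h]

lemma apply_ne_zero_of_sub_inv_eq (hq : q ≠ 0) (hm : m ≠ 0)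
    (hx_ne : ∀ t s, t ≠ s → x t * x s ≠ 1) (hx_sq : ∀ t, x t ^ 2 ≠ q ^ 2 ∧ x t ^ 2 ≠ q⁻¹ ^ 2)
    (hP : P.rank ≤ 1) (hTATA : diagonal x * A * diagonal x * A = 1)
    (hrel : A - A⁻¹ = (q - q⁻¹) • 1 - m • P) {t s : ι} (hts : t ≠ s) : A t s ≠ 0 := by
  have hAP : ∀ t s, t ≠ s → (A t s = 0 ↔ P t s = 0) := by
    intro t s hts
    have h := apply_mul_one_sub_mul_eq hTATA hrel t s
    rw [if_neg hts, zero_sub] at h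
    constructor <;> intro h0
    · simpa [h0, hm] using h
    · simpa [h0, sub_eq_zero, (hx_ne t s hts).symm] using h
  have hrow : ∀ t, ∃ s, P t s ≠ 0 := by
    intro t
    by_contra! h
    refine (apply_self_ne_zero_or_exists_mul_ne_zero hq (hx_sq t) hTATA hrel).elim (· (h t)) ?_
    rintro ⟨s, hst, hA⟩
    exact hA (by rw [(hAP t s hst.symm).2 (h s), zero_mul])
  have hcol : ∀ s, ∃ t, P t s ≠ 0 := by
    intro s
    by_contra! h
    refine (apply_self_ne_zero_or_exists_mul_ne_zero hq (hx_sq s) hTATA hrel).elim (· (h s)) ?_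
    rintro ⟨t, hts, hA⟩
    exact hA (by rw [(hAP t s hts).2 (h t), mul_zero])
  obtain ⟨s', hs'⟩ := hrow t
  obtain ⟨t', ht'⟩ := hcol s
  exact fun h => apply_ne_zero_of_rank_le_one hP hs' ht' ((hAP t s hts).1 h)

end

end Matrix

lemma zpow_injective_of_forall_zpow_ne_one {F : Type*} [DivisionRing F] {q : F} (hq : q ≠ 0)
    (hord : ∀ k : ℤ, k ≠ 0 → q ^ k ≠ 1) : Function.Injective (q ^ · : ℤ → F) := by
  intro a b (h : q ^ a = q ^ b)
  by_contra hab
  exact hord (a - b) (sub_ne_zero.2 hab) (by rw [zpow_sub₀ hq, h, div_self (zpow_ne_zero b hq)])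

theorem stmt2_general {F : Type*} [Field F] {ι : Type*} [Fintype ι] [DecidableEq ι]
    (q r : F) (hq : q ≠ 0) (hr : r ≠ 0)
    (hord : ∀ k : ℤ, k ≠ 0 → q ^ k ≠ 1)
    (hrq : r⁻¹ ≠ q) (hrq' : r⁻¹ ≠ -q⁻¹)
    (e : ι → ℤ) (hinj : Function.Injective e)
    (he : ∀ t s : ι, t ≠ s → e t + e s ≠ 0)
    (he1 : ∀ t : ι, e t ≠ 1 ∧ e t ≠ -1)
    (T A P : Matrix ι ι F)
    (hT : T = Matrix.diagonal fun t => q ^ (e t))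
    (hPrank : P.rank = 1)
    (hrel : A - A⁻¹ = (q - q⁻¹) • (1 : Matrix ι ι F) - (r - r⁻¹ + q - q⁻¹) • P)
    (hTATA : T * A * T * A = 1) :
    Algebra.adjoin F ({A, T} : Set (Matrix ι ι F)) = ⊤ := by
  have hpow := zpow_injective_of_forall_zpow_ne_one hq hord
  have hm : r - r⁻¹ + q - q⁻¹ ≠ 0 := by
    intro h
    have : (r - q⁻¹) * (r + q) = 0 := by
      linear_combination r * h + mul_inv_cancel₀ hr - mul_inv_cancel₀ hq
    rcases mul_eq_zero.1 this with h' | h'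
    · exact hrq (by rw [sub_eq_zero.1 h', inv_inv])
    · exact hrq' (by rw [eq_neg_of_add_eq_zero_left h', inv_neg])
  have hx_ne : ∀ t s, t ≠ s → q ^ e t * q ^ e s ≠ 1 := fun t s hts => by
    rw [← zpow_add₀ hq, ← zpow_zero q, hpow.ne_iff]
    exact he t s hts
  have hsq : ∀ k : ℤ, (q ^ k) ^ 2 = q ^ (2 * k) := fun k => by
    rw [mul_comm, _root_.zpow_mul]; norm_cast
  have hx_sq : ∀ t, (q ^ e t) ^ 2 ≠ q ^ 2 ∧ (q ^ e t) ^ 2 ≠ q⁻¹ ^ 2 := fun t => by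
    have h₁ : q ^ 2 = (q ^ (1 : ℤ)) ^ 2 := by rw [zpow_one]
    have h₂ : q⁻¹ ^ 2 = (q ^ (-1 : ℤ)) ^ 2 := by rw [_root_.zpow_neg_one]
    rw [h₁, h₂, hsq, hsq, hsq, hpow.ne_iff, hpow.ne_iff]
    obtain ⟨he_one, he_neg_one⟩ := he1 t
    omega
  subst hT
  exact Matrix.subalgebra_eq_top_of_diagonal_mem (hpow.comp hinj)
    (Algebra.subset_adjoin (Set.mem_insert_of_mem _ rfl))
    (Algebra.subset_adjoin (Set.mem_insert _ _))
    fun t s hts => apply_ne_zero_of_sub_inv_eq hq hm hx_ne hx_sq hPrank.le hTATA hrel hts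

/-- Under the assumptions of the previous statement, if moreover
the exponents `e t` are mutually distinct and none equals `±1`, then the
`F`-subalgebra of the matrix algebra generated by `A` and `T` is the full
matrix algebra (so the corresponding representation of `AB₂` is
indecomposable). -/
theorem stmt2 {F : Type*} [Field F] {ι : Type*} [Fintype ι] [DecidableEq ι]
    [Nonempty ι]
    (q r : F) (hq : q ≠ 0) (hr : r ≠ 0)
    (hord : ∀ k : ℤ, k ≠ 0 → q ^ k ≠ 1)
    (hrq : r⁻¹ ≠ q) (hrq' : r⁻¹ ≠ -q⁻¹)
    (e : ι → ℤ) (hinj : Function.Injective e)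
    (he : ∀ t s : ι, t ≠ s → e t + e s ≠ 0)
    (he1 : ∀ t : ι, e t ≠ 1 ∧ e t ≠ -1)
    (T A P : Matrix ι ι F)
    (hT : T = Matrix.diagonal fun t => q ^ (e t))
    (hA : IsUnit A)
    (hP2 : P * P = P) (hPrank : P.rank = 1)
    (hAP : A * P = r⁻¹ • P) (hPA : P * A = r⁻¹ • P)
    (hrel : A - A⁻¹ = (q - q⁻¹) • (1 : Matrix ι ι F) - (r - r⁻¹ + q - q⁻¹) • P)
    (hTATA : T * A * T * A = 1) :
    Algebra.adjoin F ({A, T} : Set (Matrix ι ι F)) = ⊤ :=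
  stmt2_general q r hq hr hord hrq hrq' e hinj he he1 T A P hT hPrank hrel hTATA
end

section
/- Let F be a field and q ∈ F a nonzero element of infinite multiplicative order (q^k ≠ 1 for every nonzero integer k). Let e be an integer with e ∉ {0, 1, −1}, let T be the 2×2 diagonal matrix diag(q^e, q^{−e}), and let A be an invertible 2×2 matrix over F satisfying A − A⁻¹ = (q − q⁻¹)·1 and T·A·T·A = 1. Then both off-diagonal entries of A are nonzero: A₁₂ ≠ 0 and A₂₁ ≠ 0. -/
/-- q-Murphy–Jucys lemma: for `q` of infinite multiplicative
order, `e ∉ {0, 1, -1}`, `T = diag(q^e, q^{-e})`, and `A` invertible with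
`A - A⁻¹ = (q - q⁻¹)·1` and `T·A·T·A = 1`, both off-diagonal entries of `A`
are nonzero. -/
theorem stmt3 {F : Type*} [Field F]
    (q : F) (hq : q ≠ 0) (hord : ∀ k : ℤ, k ≠ 0 → q ^ k ≠ 1)
    (e : ℤ) (he0 : e ≠ 0) (he1 : e ≠ 1) (he2 : e ≠ -1)
    (A : Matrix (Fin 2) (Fin 2) F) (hA : IsUnit A)
    (hrel : A - A⁻¹ = (q - q⁻¹) • (1 : Matrix (Fin 2) (Fin 2) F))
    (hTATA : Matrix.diagonal ![q ^ e, q ^ (-e)] * A *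
      Matrix.diagonal ![q ^ e, q ^ (-e)] * A = 1) :
    A 0 1 ≠ 0 ∧ A 1 0 ≠ 0 := by
  have hdet : IsUnit A.det := (Matrix.isUnit_iff_isUnit_det A).mp hA
  have hAinv : A * A⁻¹ = 1 := Matrix.mul_nonsing_inv A hdet
  have hsq : A * A - 1 = (q - q⁻¹) • A := by
    calc A * A - 1 = A * (A - A⁻¹) := by rw [Matrix.mul_sub, hAinv]
    _ = (q - q⁻¹) • A := by rw [hrel]; simp
  have h00 := congrFun (congrFun hsq 0) 0
  have hT := congrFun (congrFun hTATA 0) 0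
  simp [Matrix.mul_apply, Fin.sum_univ_two, Matrix.sub_apply, Matrix.one_apply,
    Matrix.smul_apply, Matrix.diagonal] at h00 hT
  -- h00 : A 0 0 * A 0 0 + A 0 1 * A 1 0 - 1 = (q - q⁻¹) * A 0 0
  -- hT  : q ^ e * A 0 0 * q ^ e * A 0 0 + q ^ e * A 0 1 * (q ^ e)⁻¹ * A 1 0 = 1
  suffices h : A 0 1 * A 1 0 ≠ 0 by
    exact ⟨fun h0 => h (by rw [h0]; ring), fun h0 => h (by rw [h0]; ring)⟩
  intro hbc
  have hT' : q ^ e * q ^ e * (A 0 0 * A 0 0) = 1 := by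
    linear_combination hT - q ^ e * (q ^ e)⁻¹ * hbc
  have hfac : (A 0 0 - q) * (q * A 0 0 + 1) = 0 := by
    linear_combination q * h00 - q * hbc - A 0 0 * (mul_inv_cancel₀ hq)
  rcases mul_eq_zero.mp hfac with ha | ha
  · have ha' : A 0 0 = q := sub_eq_zero.mp ha
    refine hord (2 * e + 2) (by omega) ?_
    rw [show (2 * e + 2 : ℤ) = e + e + 1 + 1 by ring, zpow_add₀ hq, zpow_add₀ hq,
      zpow_add₀ hq, zpow_one]
    rw [ha'] at hT'
    linear_combination hT'
  · have ha' : A 0 0 = -q⁻¹ := by field_simp; linear_combination ha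
    refine hord (2 * e - 2) (by omega) ?_
    rw [show (2 * e - 2 : ℤ) = e + e + (-1) + (-1) by ring, zpow_add₀ hq, zpow_add₀ hq,
      zpow_add₀ hq, zpow_neg_one]
    rw [ha'] at hT'
    linear_combination hT'
end

section
/- Let F be a field and q ∈ F a nonzero element of infinite multiplicative order (q^k ≠ 1 for every nonzero integer k). Let e be a nonzero integer, let T be the 2×2 diagonal matrix diag(q^e, q^{−e}), and let A be an invertible 2×2 matrix over F satisfying A − A⁻¹ = (q − q⁻¹)·1 and T·A·T·A = 1. Then the diagonal entries of A are A₁₁ = (q − q⁻¹)/(1 − q^{2e}) and A₂₂ = (q − q⁻¹)/(1 − q^{−2e}). -/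
/-- for `q` of infinite multiplicative order, `e ≠ 0`,
`T = diag(q^e, q^{-e})`, and `A` invertible with `A - A⁻¹ = (q - q⁻¹)·1` and
`T·A·T·A = 1`, the diagonal entries of `A` are
`A₁₁ = (q - q⁻¹)/(1 - q^{2e})` and `A₂₂ = (q - q⁻¹)/(1 - q^{-2e})`. -/
theorem stmt4 {F : Type*} [Field F]
    (q : F) (hq : q ≠ 0) (hord : ∀ k : ℤ, k ≠ 0 → q ^ k ≠ 1)
    (e : ℤ) (he0 : e ≠ 0)
    (A : Matrix (Fin 2) (Fin 2) F) (hA : IsUnit A)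
    (hrel : A - A⁻¹ = (q - q⁻¹) • (1 : Matrix (Fin 2) (Fin 2) F))
    (hTATA : Matrix.diagonal ![q ^ e, q ^ (-e)] * A *
      Matrix.diagonal ![q ^ e, q ^ (-e)] * A = 1) :
    A 0 0 = (q - q⁻¹) / (1 - q ^ (2 * e)) ∧
      A 1 1 = (q - q⁻¹) / (1 - q ^ (-(2 * e))) := by
  have hinv : A⁻¹ = Matrix.diagonal ![q ^ e, q ^ (-e)] * A *
      Matrix.diagonal ![q ^ e, q ^ (-e)] := Matrix.inv_eq_left_inv hTATA
  rw [hinv] at hrel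
  have h00 := congrFun (congrFun hrel 0) 0
  have h11 := congrFun (congrFun hrel 1) 1
  simp [Matrix.sub_apply, Matrix.smul_apply, Matrix.mul_diagonal,
    Matrix.diagonal_mul, Matrix.one_apply] at h00 h11
  have hne : (1 : F) - q ^ (2 * e) ≠ 0 := sub_ne_zero.mpr fun h =>
    hord (2 * e) (by omega) h.symm
  have hne' : (1 : F) - q ^ (-(2 * e)) ≠ 0 := sub_ne_zero.mpr fun h =>
    hord (-(2 * e)) (by omega) h.symm
  have hq2 : q ^ e * q ^ e = q ^ (2 * e) := by rw [← zpow_add₀ hq]; ring_nf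
  have hq2' : (q ^ e)⁻¹ * (q ^ e)⁻¹ = q ^ (-(2 * e)) := by
    rw [← zpow_neg, ← zpow_add₀ hq]; ring_nf
  constructor
  · rw [eq_div_iff hne]
    linear_combination h00 + A 0 0 * hq2
  · rw [eq_div_iff hne']
    linear_combination h11 + A 1 1 * hq2'
end

section
/- Let ν = (ν₁, ν₂, ν₃) be a dominant G2 weight. Then the minimal n ∈ ℕ for which there exists a path of length n from 0 to ν equals ν₁ + ν₂; that is, there exists a path of length ν₁ + ν₂ from 0 to ν, and every path from 0 to ν has length at least ν₁ + ν₂. -/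
/-- The `G₂` weight lattice is realized inside `ℤ³` (triples with coordinate
sum zero), encoded here as `ℤ × ℤ × ℤ`. -/
abbrev G2W : Type := ℤ × ℤ × ℤ

/-- The standard inner product of `ℝ³`, restricted to integer triples. -/
def g2ip (x y : G2W) : ℤ := x.1 * y.1 + x.2.1 * y.2.1 + x.2.2 * y.2.2

/-- The six short roots of `G₂`. -/
def g2ShortRoots : Set G2W :=
  {(1, -1, 0), (-1, 1, 0), (0, 1, -1), (0, -1, 1), (1, 0, -1), (-1, 0, 1)}

/-- The six long roots of `G₂`. -/
def g2LongRoots : Set G2W :=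
  {(2, -1, -1), (-2, 1, 1), (-1, 2, -1), (1, -2, 1), (-1, -1, 2), (1, 1, -2)}

/-- The twelve roots of `G₂`. -/
def g2Roots : Set G2W := g2ShortRoots ∪ g2LongRoots

/-- The Weyl vector `ρ = (2, 1, -3)` of `G₂`. -/
def g2rho : G2W := (2, 1, -3)

/-- A weight `x` in the lattice is dominant if `x₁ ≥ x₂ ≥ 0 ≥ x₃`
(and `x₁ + x₂ + x₃ = 0`). -/
def G2Dominant (x : G2W) : Prop :=
  x.1 + x.2.1 + x.2.2 = 0 ∧ x.2.1 ≤ x.1 ∧ 0 ≤ x.2.1 ∧ x.2.2 ≤ 0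

/-- Edge `μ → δ` of the tensor-product graph for the 7-dimensional
representation `V` of `G₂`: both weights are dominant and either `δ - μ` is a
short root, or `δ = μ` and `μ₁ > μ₂`. -/
def G2Edge (μ δ : G2W) : Prop :=
  G2Dominant μ ∧ G2Dominant δ ∧
    (δ - μ ∈ g2ShortRoots ∨ (δ = μ ∧ μ.2.1 < μ.1))

/-- `t` is a path of length `n` from `lam` to `nu`: a sequence of dominant
weights starting at `lam`, ending at `nu`, with an edge at each step. -/
def G2IsPath (t : ℕ → G2W) (n : ℕ) (lam nu : G2W) : Prop :=
  t 0 = lam ∧ t n = nu ∧ ∀ i < n, G2Edge (t i) (t (i + 1))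

lemma edge_bound {μ δ : G2W} (h : G2Edge μ δ) :
    δ.1 + δ.2.1 ≤ μ.1 + μ.2.1 + 1 := by
  obtain ⟨-, -, h | ⟨rfl, -⟩⟩ := h
  · simp only [g2ShortRoots, Set.mem_insert_iff, Set.mem_singleton_iff,
      sub_eq_iff_eq_add, Prod.ext_iff, Prod.fst_add, Prod.snd_add] at h
    rcases h with h|h|h|h|h|h <;> simp_all <;> omega
  · omega

/-- for a dominant `G₂` weight `ν = (ν₁, ν₂, ν₃)`, the minimal
length of a path from `0` to `ν` equals `ν₁ + ν₂`: there is a path of length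
`ν₁ + ν₂` from `0` to `ν`, and every path from `0` to `ν` has length at least
`ν₁ + ν₂`. -/
theorem stmt5 (nu : G2W) (hnu : G2Dominant nu) :
    (∃ t : ℕ → G2W, G2IsPath t (nu.1 + nu.2.1).toNat 0 nu) ∧
      ∀ (n : ℕ) (t : ℕ → G2W), G2IsPath t n 0 nu → (nu.1 + nu.2.1).toNat ≤ n := by
  obtain ⟨hsum, h21, h2, h3⟩ := hnu
  constructor
  · set a := nu.1.toNat with ha'
    set b := nu.2.1.toNat with hb'
    have ha : (a : ℤ) = nu.1 := Int.toNat_of_nonneg (by omega)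
    have hb : (b : ℤ) = nu.2.1 := Int.toNat_of_nonneg h2
    have hba : b ≤ a := by omega
    have hab : (nu.1 + nu.2.1).toNat = a + b := by omega
    rw [hab]
    refine ⟨fun i => (((min i a : ℕ) : ℤ), ((min i (a + b) - min i a : ℕ) : ℤ),
      -((min i (a + b) : ℕ) : ℤ)), ?_, ?_, ?_⟩
    · simp [Prod.ext_iff]
    · simp only [min_self, le_refl, min_eq_right (Nat.le_add_right a b)]
      have h3' : nu.2.2 = -(nu.1 + nu.2.1) := by omega
      simp [Prod.ext_iff, h3']
      omega
    · intro i hi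
      have dom : ∀ j, G2Dominant (((min j a : ℕ) : ℤ), ((min j (a + b) - min j a : ℕ) : ℤ),
          -((min j (a + b) : ℕ) : ℤ)) := by
        intro j
        refine ⟨?_, ?_, ?_, ?_⟩ <;> push_cast <;> omega
      refine ⟨dom i, dom (i + 1), Or.inl ?_⟩
      rcases lt_or_ge i a with h | h
      · have : ((((min (i+1) a : ℕ) : ℤ), ((min (i+1) (a + b) - min (i+1) a : ℕ) : ℤ),
            -((min (i+1) (a + b) : ℕ) : ℤ)) : G2W)
            - (((min i a : ℕ) : ℤ), ((min i (a + b) - min i a : ℕ) : ℤ),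
            -((min i (a + b) : ℕ) : ℤ)) = ((1 : ℤ), (0 : ℤ), (-1 : ℤ)) := by
          simp [Prod.ext_iff]
          omega
        rw [this]
        simp [g2ShortRoots]
      · have : ((((min (i+1) a : ℕ) : ℤ), ((min (i+1) (a + b) - min (i+1) a : ℕ) : ℤ),
            -((min (i+1) (a + b) : ℕ) : ℤ)) : G2W)
            - (((min i a : ℕ) : ℤ), ((min i (a + b) - min i a : ℕ) : ℤ),
            -((min i (a + b) : ℕ) : ℤ)) = ((0 : ℤ), (1 : ℤ), (-1 : ℤ)) := by
          simp [Prod.ext_iff]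
          omega
        rw [this]
        simp [g2ShortRoots]
  · intro n t ht
    obtain ⟨h0, hn, hstep⟩ := ht
    have key : ∀ i, i ≤ n → (t i).1 + (t i).2.1 ≤ i := by
      intro i
      induction i with
      | zero => intro _; simp [h0]
      | succ k ih =>
        intro hk
        have hk' : k < n := by omega
        have := edge_bound (hstep k hk')
        have := ih (by omega)
        push_cast
        omega
    have := key n le_rfl
    rw [hn] at this
    omega
end

section
/- Let λ and ν be dominant G2 weights, and let w be an element of the Weyl group W of G2 such that w(ν − λ) is dominant. Then there exists a path from λ to ν, and the minimal length of a path from λ to ν equals (w(ν−λ))₁ + (w(ν−λ))₂, i.e. it equals the minimal length of a path from 0 to w(ν − λ). -/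
/-- Rational 3-space, on which the Weyl group of `G₂` acts. -/
abbrev G2Q : Type := ℚ × ℚ × ℚ

/-- The standard inner product on `ℚ³`. -/
def g2ipQ (x y : G2Q) : ℚ := x.1 * y.1 + x.2.1 * y.2.1 + x.2.2 * y.2.2

/-- The embedding of the integral weight lattice into `ℚ³`. -/
def g2toQ (x : G2W) : G2Q := ((x.1 : ℚ), (x.2.1 : ℚ), (x.2.2 : ℚ))

/-- The reflection `s_α : x ↦ x - (2(x,α)/(α,α))·α` in the root `α`. -/
def g2Reflection (α : G2Q) : G2Q → G2Q :=
  fun x => x - (2 * g2ipQ x α / g2ipQ α α) • α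

/-- The Weyl group `W` of `G₂`, realized (as reflections are involutions) as
the submonoid of `Function.End ℚ³` generated by the reflections `s_α` in the
twelve roots of `G₂`. -/
def g2Weyl : Submonoid (Function.End G2Q) :=
  Submonoid.closure {f | ∃ α ∈ g2Roots, f = g2Reflection (g2toQ α)}

/-!
The Weyl group acts on the lattice by signed permutations of the coordinates (a short-root
reflection swaps two coordinates, a long-root reflection swaps two and negates all three), so
it preserves the sup-norm `‖x‖∞`; for dominant `μ` one has `‖μ‖∞ = μ₁ + μ₂`. Hence the
claim is that the distance from `λ` to `ν` in the graph is `‖ν - λ‖∞`. Every edge moves a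
weight by a vector of sup-norm at most `1`, which gives the lower bound. Conversely, from a
dominant `λ ≠ ν` some short-root step keeps the weight dominant and brings it one unit closer
to `ν` in the sup-norm, so a greedy walk realizes the bound.
-/

def g2SupNorm (x : G2W) : ℤ := max |x.1| (max |x.2.1| |x.2.2|)

def g2Lattice : Set G2W := {x | x.1 + x.2.1 + x.2.2 = 0}

theorem g2SupNorm_add_le (x y : G2W) : g2SupNorm (x + y) ≤ g2SupNorm x + g2SupNorm y := by
  simp only [g2SupNorm, Prod.fst_add, Prod.snd_add]
  refine max_le ?_ (max_le ?_ ?_) <;> refine (abs_add_le _ _).trans (add_le_add ?_ ?_) <;>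
    simp only [le_max_iff, le_refl, true_or, or_true]

theorem g2SupNorm_of_mem_g2ShortRoots {u : G2W} (hu : u ∈ g2ShortRoots) : g2SupNorm u = 1 := by
  simp only [g2ShortRoots, Set.mem_insert_iff, Set.mem_singleton_iff] at hu
  rcases hu with rfl | rfl | rfl | rfl | rfl | rfl <;> rfl

theorem G2Dominant.g2SupNorm_eq {μ : G2W} (hμ : G2Dominant μ) : g2SupNorm μ = μ.1 + μ.2.1 := by
  obtain ⟨hsum, h21, h2, h3⟩ := hμ
  simp only [g2SupNorm, abs_eq_max_neg]
  omega

theorem G2Dominant.mem_g2Lattice {x : G2W} (hx : G2Dominant x) : x ∈ g2Lattice := hx.1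

theorem G2Edge.g2SupNorm_sub_le {μ δ : G2W} (h : G2Edge μ δ) : g2SupNorm (δ - μ) ≤ 1 := by
  rcases h.2.2 with hu | ⟨rfl, -⟩
  · exact (g2SupNorm_of_mem_g2ShortRoots hu).le
  · simp [g2SupNorm]

theorem G2IsPath.g2SupNorm_sub_le {t : ℕ → G2W} {n : ℕ} {lam nu : G2W}
    (ht : G2IsPath t n lam nu) : g2SupNorm (nu - lam) ≤ n := by
  obtain ⟨rfl, rfl, hedge⟩ := ht
  suffices ∀ i ≤ n, g2SupNorm (t i - t 0) ≤ i from this n le_rfl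
  intro i hi
  induction i with
  | zero => simp [g2SupNorm]
  | succ i ih =>
    calc g2SupNorm (t (i + 1) - t 0) = g2SupNorm ((t (i + 1) - t i) + (t i - t 0)) := by
          rw [sub_add_sub_cancel]
      _ ≤ g2SupNorm (t (i + 1) - t i) + g2SupNorm (t i - t 0) := g2SupNorm_add_le _ _
      _ ≤ 1 + i := add_le_add (hedge i hi).g2SupNorm_sub_le (ih (by omega))
      _ = (i + 1 : ℕ) := by push_cast; ring

theorem G2IsPath.cons {t : ℕ → G2W} {n : ℕ} {lam delta nu : G2W} (h : G2Edge lam delta)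
    (ht : G2IsPath t n delta nu) :
    G2IsPath (fun i => if i = 0 then lam else t (i - 1)) (n + 1) lam nu := by
  obtain ⟨h0, hn, hedge⟩ := ht
  refine ⟨rfl, by simpa using hn, fun i hi => ?_⟩
  rcases i with _ | i
  · simpa [h0] using h
  · simpa using hedge i (by omega)

theorem exists_g2ShortRoots_step {lam nu : G2W} (hlam : G2Dominant lam) (hnu : G2Dominant nu)
    (hm : 0 < g2SupNorm (nu - lam)) :
    ∃ u ∈ g2ShortRoots,
      G2Dominant (lam + u) ∧ g2SupNorm (nu - (lam + u)) < g2SupNorm (nu - lam) := by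
  generalize hm_def : g2SupNorm (nu - lam) = m at hm ⊢
  obtain ⟨l1, l2, l3⟩ := lam
  obtain ⟨n1, n2, n3⟩ := nu
  simp only [g2SupNorm, Prod.mk_sub_mk] at hm_def
  have hbound : |n1 - l1| ≤ m ∧ |n2 - l2| ≤ m ∧ |n3 - l3| ≤ m := by
    rw [← hm_def]
    exact ⟨le_max_left _ _, (le_max_left _ _).trans (le_max_right _ _),
      (le_max_right _ _).trans (le_max_right _ _)⟩
  have hmax : n1 - l1 = m ∨ l1 - n1 = m ∨ n2 - l2 = m ∨ l2 - n2 = m ∨ n3 - l3 = m ∨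
      l3 - n3 = m := by
    simp only [← hm_def, abs_eq_max_neg]
    omega
  simp only [abs_le] at hbound
  simp only [G2Dominant] at hlam hnu
  simp only [G2Dominant, g2SupNorm, Prod.fst_add, Prod.snd_add, Prod.fst_sub, Prod.snd_sub,
    max_lt_iff, abs_lt]
  -- A coordinate of `ν - λ` of modulus `m` has to move towards `0`; of the two short roots
  -- doing so, take one along which `λ` stays dominant.
  rcases hmax with h | h | h | h | h | h
  · by_cases h' : n2 - l2 = -m
    · exact ⟨(1, -1, 0), by simp [g2ShortRoots], by dsimp only; omega⟩
    · exact ⟨(1, 0, -1), by simp [g2ShortRoots], by dsimp only; omega⟩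
  · by_cases h' : n2 - l2 = m
    · exact ⟨(-1, 1, 0), by simp [g2ShortRoots], by dsimp only; omega⟩
    · exact ⟨(-1, 0, 1), by simp [g2ShortRoots], by dsimp only; omega⟩
  · by_cases h' : n1 - l1 = -m
    · exact ⟨(-1, 1, 0), by simp [g2ShortRoots], by dsimp only; omega⟩
    · exact ⟨(0, 1, -1), by simp [g2ShortRoots], by dsimp only; omega⟩
  · by_cases h' : n3 - l3 = m
    · exact ⟨(0, -1, 1), by simp [g2ShortRoots], by dsimp only; omega⟩
    · exact ⟨(1, -1, 0), by simp [g2ShortRoots], by dsimp only; omega⟩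
  · by_cases h' : n1 - l1 = -m
    · exact ⟨(-1, 0, 1), by simp [g2ShortRoots], by dsimp only; omega⟩
    · exact ⟨(0, -1, 1), by simp [g2ShortRoots], by dsimp only; omega⟩
  · by_cases h' : n2 - l2 = m
    · exact ⟨(0, 1, -1), by simp [g2ShortRoots], by dsimp only; omega⟩
    · exact ⟨(1, 0, -1), by simp [g2ShortRoots], by dsimp only; omega⟩

theorem exists_g2IsPath_of_g2SupNorm_eq {lam nu : G2W} (hlam : G2Dominant lam)
    (hnu : G2Dominant nu) {k : ℕ} (hk : g2SupNorm (nu - lam) = k) :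
    ∃ t : ℕ → G2W, G2IsPath t k lam nu := by
  induction k generalizing lam with
  | zero =>
    have hnu_eq : nu = lam := by
      obtain ⟨l1, l2, l3⟩ := lam
      obtain ⟨n1, n2, n3⟩ := nu
      simp only [g2SupNorm, Prod.mk_sub_mk, abs_eq_max_neg, Nat.cast_zero] at hk
      simp only [Prod.mk.injEq]
      omega
    exact ⟨fun _ => lam, rfl, hnu_eq.symm, by simp⟩
  | succ k ih =>
    obtain ⟨u, hu, hdom, hlt⟩ := exists_g2ShortRoots_step hlam hnu (by omega)
    have hge : g2SupNorm (nu - lam) ≤ g2SupNorm (nu - (lam + u)) + 1 := by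
      calc g2SupNorm (nu - lam) = g2SupNorm ((nu - (lam + u)) + u) := by abel_nf
        _ ≤ _ := g2SupNorm_of_mem_g2ShortRoots hu ▸ g2SupNorm_add_le _ _
    have hedge : G2Edge lam (lam + u) := ⟨hlam, hdom, Or.inl (by simpa using hu)⟩
    obtain ⟨t, ht⟩ := ih hdom (by omega)
    exact ⟨_, ht.cons hedge⟩

theorem sub_mem_g2Lattice {x y : G2W} (hx : x ∈ g2Lattice) (hy : y ∈ g2Lattice) :
    x - y ∈ g2Lattice := by
  simp only [g2Lattice, Set.mem_ofPred_eq, Prod.fst_sub, Prod.snd_sub] at *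
  linear_combination hx - hy

theorem zsmul_mem_g2Lattice (k : ℤ) {x : G2W} (hx : x ∈ g2Lattice) : k • x ∈ g2Lattice := by
  simp only [g2Lattice, Set.mem_ofPred_eq, Prod.smul_fst, Prod.smul_snd, smul_eq_mul] at *
  linear_combination k * hx

theorem mem_g2Lattice_of_mem_g2Roots {α : G2W} (hα : α ∈ g2Roots) : α ∈ g2Lattice := by
  simp only [g2Roots, g2ShortRoots, g2LongRoots, Set.mem_union, Set.mem_insert_iff,
    Set.mem_singleton_iff] at hα
  rcases hα with (rfl | rfl | rfl | rfl | rfl | rfl) | (rfl | rfl | rfl | rfl | rfl | rfl) <;> rfl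

theorem g2ip_self_ne_zero {α : G2W} (hα : α ∈ g2Roots) : g2ip α α ≠ 0 := by
  simp only [g2Roots, g2ShortRoots, g2LongRoots, Set.mem_union, Set.mem_insert_iff,
    Set.mem_singleton_iff] at hα
  rcases hα with (rfl | rfl | rfl | rfl | rfl | rfl) | (rfl | rfl | rfl | rfl | rfl | rfl) <;>
    decide

theorem g2ip_self_dvd_two_mul_g2ip {α x : G2W} (hα : α ∈ g2Roots) (hx : x ∈ g2Lattice) :
    g2ip α α ∣ 2 * g2ip x α := by
  obtain ⟨x1, x2, x3⟩ := x
  simp only [g2Lattice, Set.mem_ofPred_eq] at hx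
  simp only [g2Roots, g2ShortRoots, g2LongRoots, Set.mem_union, Set.mem_insert_iff,
    Set.mem_singleton_iff] at hα
  rcases hα with (rfl | rfl | rfl | rfl | rfl | rfl) | (rfl | rfl | rfl | rfl | rfl | rfl) <;>
    norm_num [g2ip] <;> omega

-- The `ℤ`-division is exact for a root `α` and `x ∈ g2Lattice`, see `g2ip_self_dvd_two_mul_g2ip`.
def g2ReflectionInt (α x : G2W) : G2W := x - (2 * g2ip x α / g2ip α α) • α

theorem g2ReflectionInt_mem_g2Lattice {α x : G2W} (hα : α ∈ g2Roots) (hx : x ∈ g2Lattice) :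
    g2ReflectionInt α x ∈ g2Lattice :=
  sub_mem_g2Lattice hx (zsmul_mem_g2Lattice _ (mem_g2Lattice_of_mem_g2Roots hα))

theorem g2SupNorm_g2ReflectionInt {α x : G2W} (hα : α ∈ g2Roots) (hx : x ∈ g2Lattice) :
    g2SupNorm (g2ReflectionInt α x) = g2SupNorm x := by
  obtain ⟨x1, x2, x3⟩ := x
  simp only [g2Lattice, Set.mem_ofPred_eq] at hx
  simp only [g2Roots, g2ShortRoots, g2LongRoots, Set.mem_union, Set.mem_insert_iff,
    Set.mem_singleton_iff] at hα
  rcases hα with (rfl | rfl | rfl | rfl | rfl | rfl) | (rfl | rfl | rfl | rfl | rfl | rfl) <;>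
    refine eq_of_forall_ge_iff fun m => ?_ <;>
    norm_num [g2ReflectionInt, g2ip, g2SupNorm, abs_le] <;> omega

theorem g2toQ_sub (x y : G2W) : g2toQ (x - y) = g2toQ x - g2toQ y := by
  simp [g2toQ]

theorem g2toQ_zsmul (k : ℤ) (x : G2W) : g2toQ (k • x) = (k : ℚ) • g2toQ x := by
  simp [g2toQ]

theorem g2ipQ_g2toQ (x y : G2W) : g2ipQ (g2toQ x) (g2toQ y) = g2ip x y := by
  simp [g2ipQ, g2toQ, g2ip]

theorem g2toQ_injective : Function.Injective g2toQ := by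
  intro x y h
  simpa [g2toQ, Prod.ext_iff] using h

theorem g2toQ_g2ReflectionInt {α x : G2W} (hα : α ∈ g2Roots) (hx : x ∈ g2Lattice) :
    g2toQ (g2ReflectionInt α x) = g2Reflection (g2toQ α) (g2toQ x) := by
  rw [g2ReflectionInt, g2Reflection, g2toQ_sub, g2toQ_zsmul, g2ipQ_g2toQ, g2ipQ_g2toQ,
    Int.cast_div (g2ip_self_dvd_two_mul_g2ip hα hx), Int.cast_mul, Int.cast_ofNat]
  exact_mod_cast g2ip_self_ne_zero hα

theorem exists_g2Weyl_apply_eq {w : Function.End G2Q} (hw : w ∈ g2Weyl) {x : G2W}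
    (hx : x ∈ g2Lattice) :
    ∃ y ∈ g2Lattice, w (g2toQ x) = g2toQ y ∧ g2SupNorm y = g2SupNorm x := by
  induction hw using Submonoid.closure_induction generalizing x with
  | mem f hf =>
    obtain ⟨α, hα, rfl⟩ := hf
    exact ⟨g2ReflectionInt α x, g2ReflectionInt_mem_g2Lattice hα hx,
      (g2toQ_g2ReflectionInt hα hx).symm, g2SupNorm_g2ReflectionInt hα hx⟩
  | one => exact ⟨x, hx, rfl, rfl⟩
  | mul f g _ _ hf hg =>
    obtain ⟨y, hy, hgy, hny⟩ := hg hx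
    obtain ⟨z, hz, hfz, hnz⟩ := hf hy
    exact ⟨z, hz, by show f (g _) = _; rw [hgy, hfz], hnz.trans hny⟩

/-- for dominant `G₂` weights `λ`, `ν` and a Weyl group element
`w` with `w(ν - λ)` dominant (say `w(ν - λ) = μ` with `μ` a dominant lattice
weight), there exists a path from `λ` to `ν`, and the minimal length of a path
from `λ` to `ν` equals `μ₁ + μ₂ = (w(ν-λ))₁ + (w(ν-λ))₂`, the minimal length
of a path from `0` to `w(ν - λ)`. -/
theorem stmt6 (lam nu mu : G2W) (hlam : G2Dominant lam) (hnu : G2Dominant nu)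
    (w : Function.End G2Q) (hw : w ∈ g2Weyl)
    (hmu : G2Dominant mu) (hwmu : g2toQ mu = w (g2toQ nu - g2toQ lam)) :
    (∃ t : ℕ → G2W, G2IsPath t (mu.1 + mu.2.1).toNat lam nu) ∧
      ∀ (n : ℕ) (t : ℕ → G2W), G2IsPath t n lam nu →
        (mu.1 + mu.2.1).toNat ≤ n := by
  obtain ⟨y, -, hwy, hy⟩ :=
    exists_g2Weyl_apply_eq hw (sub_mem_g2Lattice hnu.mem_g2Lattice hlam.mem_g2Lattice)
  have hmu_eq : mu = y := g2toQ_injective (by rw [hwmu, ← hwy, g2toQ_sub])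
  have hnorm : g2SupNorm (nu - lam) = mu.1 + mu.2.1 := by
    rw [← hy, ← hmu_eq, hmu.g2SupNorm_eq]
  have hnonneg : 0 ≤ mu.1 + mu.2.1 := by linarith [hmu.2.2.1, hmu.2.1]
  refine ⟨exists_g2IsPath_of_g2SupNorm_eq hlam hnu (by omega), fun n t ht => ?_⟩
  have := ht.g2SupNorm_sub_le
  omega
end

section
/- Let δ and ν be dominant G2 weights with δ ≠ ν, and suppose there exist at least two distinct paths of length 2 from δ to ν. Then for every path t : δ → μ → ν of length 2, setting β = μ − δ and β̃ = ν − μ, the integer e(t) = (δ+ρ, β−β̃) − (β, β̃) + ((β,β) − (β̃,β̃))/2 + 1 satisfies e(t) ≠ 1 and e(t) ≠ −1. -/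

lemma edge_char {m1 m2 m3 d1 d2 d3 : ℤ} (h : G2Edge (m1, m2, m3) (d1, d2, d3)) :
    (m1 + m2 + m3 = 0 ∧ m2 ≤ m1 ∧ 0 ≤ m2 ∧ m3 ≤ 0) ∧
    (d1 + d2 + d3 = 0 ∧ d2 ≤ d1 ∧ 0 ≤ d2 ∧ d3 ≤ 0) ∧
    ((d1 = m1 + 1 ∧ d2 = m2 - 1 ∧ d3 = m3) ∨
     (d1 = m1 - 1 ∧ d2 = m2 + 1 ∧ d3 = m3) ∨
     (d1 = m1 ∧ d2 = m2 + 1 ∧ d3 = m3 - 1) ∨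
     (d1 = m1 ∧ d2 = m2 - 1 ∧ d3 = m3 + 1) ∨
     (d1 = m1 + 1 ∧ d2 = m2 ∧ d3 = m3 - 1) ∨
     (d1 = m1 - 1 ∧ d2 = m2 ∧ d3 = m3 + 1) ∨
     (d1 = m1 ∧ d2 = m2 ∧ d3 = m3 ∧ m2 < m1)) := by
  obtain ⟨hm, hd, hc⟩ := h
  dsimp only [G2Dominant] at hm hd
  refine ⟨hm, hd, ?_⟩
  rcases hc with hc | ⟨he, hlt⟩
  · simp only [g2ShortRoots, Set.mem_insert_iff, Set.mem_singleton_iff,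
      Prod.mk_sub_mk, Prod.mk.injEq] at hc
    rcases hc with h|h|h|h|h|h
    · exact Or.inl (by omega)
    · exact Or.inr (Or.inl (by omega))
    · exact Or.inr (Or.inr (Or.inl (by omega)))
    · exact Or.inr (Or.inr (Or.inr (Or.inl (by omega))))
    · exact Or.inr (Or.inr (Or.inr (Or.inr (Or.inl (by omega)))))
    · exact Or.inr (Or.inr (Or.inr (Or.inr (Or.inr (Or.inl (by omega))))))
  · simp only [Prod.mk.injEq] at he
    have hlt2 : m2 < m1 := hlt
    exact Or.inr (Or.inr (Or.inr (Or.inr (Or.inr (Or.inr (by omega))))))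

set_option maxHeartbeats 4000000 in
/-- let `δ ≠ ν` be dominant `G₂` weights admitting at least two
distinct paths of length 2 from `δ` to `ν`. Then for every path
`t : δ → μ → ν`, with `β = μ - δ` and `β̃ = ν - μ`, the integer
`e(t) = (δ+ρ, β-β̃) - (β,β̃) + ((β,β) - (β̃,β̃))/2 + 1` is not equal to `±1`. -/
theorem stmt7 (dlt nu : G2W) (hne : dlt ≠ nu)
    (htwo : ∃ mu1 mu2 : G2W, mu1 ≠ mu2 ∧
      G2Edge dlt mu1 ∧ G2Edge mu1 nu ∧ G2Edge dlt mu2 ∧ G2Edge mu2 nu)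
    (mu : G2W) (h1 : G2Edge dlt mu) (h2 : G2Edge mu nu) :
    g2ip (dlt + g2rho) ((mu - dlt) - (nu - mu)) - g2ip (mu - dlt) (nu - mu) +
        (g2ip (mu - dlt) (mu - dlt) - g2ip (nu - mu) (nu - mu)) / 2 + 1 ≠ 1 ∧
      g2ip (dlt + g2rho) ((mu - dlt) - (nu - mu)) - g2ip (mu - dlt) (nu - mu) +
        (g2ip (mu - dlt) (mu - dlt) - g2ip (nu - mu) (nu - mu)) / 2 + 1 ≠ -1 := by
  obtain ⟨mu1, mu2, h12, ha, hb, hc, hd⟩ := htwo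
  obtain ⟨d1, d2, d3⟩ := dlt
  obtain ⟨n1, n2, n3⟩ := nu
  obtain ⟨m1, m2, m3⟩ := mu
  obtain ⟨p1, p2, p3⟩ := mu1
  obtain ⟨q1, q2, q3⟩ := mu2
  have hne2 : ¬(d1 = n1 ∧ d2 = n2 ∧ d3 = n3) := by
    rintro ⟨rfl, rfl, rfl⟩; exact hne rfl
  have h12b : ¬(p1 = q1 ∧ p2 = q2 ∧ p3 = q3) := by
    rintro ⟨rfl, rfl, rfl⟩; exact h12 rfl
  obtain ⟨hdm, hdd, h1b⟩ := edge_char h1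
  obtain ⟨-, hdn, h2b⟩ := edge_char h2
  simp only [g2ip, g2rho, Prod.mk_add_mk, Prod.mk_sub_mk]
  rcases h1b with ⟨e1,e2,e3⟩|⟨e1,e2,e3⟩|⟨e1,e2,e3⟩|⟨e1,e2,e3⟩|⟨e1,e2,e3⟩|⟨e1,e2,e3⟩|⟨e1,e2,e3,e4⟩ <;>
    rcases h2b with ⟨f1,f2,f3⟩|⟨f1,f2,f3⟩|⟨f1,f2,f3⟩|⟨f1,f2,f3⟩|⟨f1,f2,f3⟩|⟨f1,f2,f3⟩|⟨f1,f2,f3,f4⟩ <;>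
    subst e1 e2 e3 f1 f2 f3 <;>
    (try ring_nf) <;>
    first
    | omega
    | (obtain ⟨-, hp, hA⟩ := edge_char ha
       obtain ⟨-, -, hB⟩ := edge_char hb
       obtain ⟨-, hq, hC⟩ := edge_char hc
       obtain ⟨-, -, hD⟩ := edge_char hd
       rcases hA with hA|hA|hA|hA|hA|hA|hA <;> rcases hB with hB|hB|hB|hB|hB|hB|hB <;>
         omega)
end

section
/- Let F be a field and q ∈ F a nonzero element with q² ≠ 1; write [n] = (qⁿ − q⁻ⁿ)/(q − q⁻¹) for n ∈ ℤ. Then for all integers p and m, q^{p+m−5} · ( [−(p+m)] + [p+m+2] + [p−m+2] + [m−p+2] ) = q⁻⁵ · ( (q + q⁻¹)(q^{2p} + q^{2m}) + q^{2(p+m)+1} + q⁻¹ ). -/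
def qint {F : Type*} [Field F] (q : F) (n : ℤ) : F :=
  (q ^ n - q ^ (-n)) / (q - q⁻¹)

/-!
Since `[-n] = -[n]`, the four quantum integers pair up by the two product formulas
`[a + b] - [a - b] = [b](qᵃ + q⁻ᵃ)` and `[a + b] + [a - b] = [a](qᵇ + q⁻ᵇ)`: with `s = p + m` and
`d = p - m`, the sum is `[1](q^{s+1} + q^{-(s+1)}) + [2](q^d + q^{-d})`, where `[1] = 1` and
`[2] = q + q⁻¹`. Multiplying by `q^{s-5}` turns `q^{±d}` into `q^{2p}, q^{2m}` up to `q⁻⁵`.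
-/

section QuantumInteger

variable {F : Type*} [Field F] {q : F}

theorem sub_inv_ne_zero_of_sq_ne_one (hq : q ≠ 0) (hq2 : q ^ 2 ≠ 1) : q - q⁻¹ ≠ 0 := by
  intro h
  apply hq2
  have := sub_eq_zero.mp h
  field_simp at this
  linear_combination this

theorem qint_neg (n : ℤ) : qint q (-n) = -qint q n := by
  simp only [qint, neg_neg, ← neg_div, neg_sub]

theorem qint_one (hden : q - q⁻¹ ≠ 0) : qint q 1 = 1 := by
  simp [qint, div_self hden]

theorem qint_two (hden : q - q⁻¹ ≠ 0) : qint q 2 = q + q⁻¹ := by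
  rw [qint, div_eq_iff hden]
  simp only [zpow_neg, zpow_ofNat]
  ring

theorem qint_add_sub_qint_sub (hq : q ≠ 0) (a b : ℤ) :
    qint q (a + b) - qint q (a - b) = qint q b * (q ^ a + q ^ (-a)) := by
  simp only [qint, ← sub_div, div_mul_eq_mul_div]
  congr 1
  simp only [zpow_add₀ hq, zpow_sub₀ hq, zpow_neg, neg_add, neg_sub]
  field_simp
  ring

theorem qint_add_add_qint_sub (hq : q ≠ 0) (a b : ℤ) :
    qint q (a + b) + qint q (a - b) = qint q a * (q ^ b + q ^ (-b)) := by
  simp only [qint, ← add_div, div_mul_eq_mul_div]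
  congr 1
  simp only [zpow_add₀ hq, zpow_sub₀ hq, zpow_neg, neg_add, neg_sub]
  field_simp
  ring

end QuantumInteger

/-- for `q ≠ 0` with `q² ≠ 1` and all integers `p, m`,
`q^{p+m-5}·([-(p+m)] + [p+m+2] + [p-m+2] + [m-p+2])
  = q⁻⁵·((q + q⁻¹)(q^{2p} + q^{2m}) + q^{2(p+m)+1} + q⁻¹)`,
the identity underlying the structure coefficient `c(λ,ν)`. -/
theorem stmt10 {F : Type*} [Field F]
    (q : F) (hq : q ≠ 0) (hq2 : q ^ 2 ≠ 1) (p m : ℤ) :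
    q ^ (p + m - 5) *
        (qint q (-(p + m)) + qint q (p + m + 2) + qint q (p - m + 2) +
          qint q (m - p + 2))
      = q ^ (-5 : ℤ) *
        ((q + q⁻¹) * (q ^ (2 * p) + q ^ (2 * m)) + q ^ (2 * (p + m) + 1) + q⁻¹) := by
  have hden := sub_inv_ne_zero_of_sq_ne_one hq hq2
  have hsum : qint q (-(p + m)) + qint q (p + m + 2) + qint q (p - m + 2) + qint q (m - p + 2)
      = (q ^ (p + m + 1) + q ^ (-(p + m + 1))) + (q + q⁻¹) * (q ^ (p - m) + q ^ (-(p - m))) := by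
    have hs := qint_add_sub_qint_sub hq (p + m + 1) 1
    have hd := qint_add_add_qint_sub hq 2 (p - m)
    rw [qint_one hden, add_sub_cancel_right] at hs
    rw [qint_two hden] at hd
    rw [qint_neg, show p - m + 2 = 2 + (p - m) by ring, show m - p + 2 = 2 - (p - m) by ring,
      show p + m + 2 = p + m + 1 + 1 by ring]
    linear_combination hs + hd
  rw [hsum]
  simp only [mul_add, zpow_add₀ hq, zpow_sub₀ hq, zpow_neg, zpow_mul', zpow_one]
  field_simp
  ring
end
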